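/- For two option sets with the same intra-option policies and policy over options but with termination functions satisfying β̃_w(s) ≤ β_w(s) for all options w and states s, the induced termination matrices satisfy Ñ ≤ N entrywise, and hence ρ(M̃^{-1}Ñ) ≤ ρ(M^{-1}N) < 1. -/

import Mathlib

open Matrix

/-- The spectral radius of a real matrix: the supremum of the moduli of its
complex eigenvalues (elements of the spectrum of the complexified matrix). -/
noncomputable def specRad {m : Type*} [Fintype m] [DecidableEq m]
    (A : Matrix m m ℝ) : ℝ :=
  sSup {x : ℝ | ∃ μ : ℂ, μ ∈ spectrum ℂ (A.map (algebraMap ℝ ℂ)) ∧ x = ‖μ‖}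

/-!
With `A := 1 - γ P_σ`, both `A = M - N` and `A = M̃ - Ñ` are regular splittings (`M⁻¹ ≥ 0`,
`N ≥ 0`) and `A⁻¹ ≥ 0`. For `X ≥ 0` and `s > 0`, `ρ(X) < s` iff `s - X` has a nonnegative
inverse: one way by the Neumann series, convergent by Gelfand's formula; the other way because the
moduli of an eigenvector for `λ` give `u ≥ 0` with `|λ| u ≤ X u`, and applying `(s - X)⁻¹ ≥ 0` to
`(s - X) u ≤ (s - |λ|) u` forces `|λ| < s`. Hence `ρ(M⁻¹N) < t ↔ (tM - N)⁻¹ ≥ 0`, where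
`tM - N = tA - (1 - t)N`. At `t = 1` this gives `ρ(M⁻¹N) < 1`; for `t ≤ 1`, replacing `N` by
`Ñ ≤ N` keeps `tA - (1 - t)N` inverse-nonnegative, as the Neumann series of `A⁻¹Ñ` is dominated
by that of `A⁻¹N`.
-/

open Finset Filter

lemma one_entry_nonneg {n : Type*} [DecidableEq n] (i j : n) : 0 ≤ (1 : Matrix n n ℝ) i j := by
  rw [one_apply]; split_ifs <;> norm_num

section Nonneg

variable {n : Type*} [Fintype n]

lemma mul_entry_nonneg {X Y : Matrix n n ℝ} (hX : ∀ i j, 0 ≤ X i j) (hY : ∀ i j, 0 ≤ Y i j)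
    (i j : n) : 0 ≤ (X * Y) i j :=
  sum_nonneg fun k _ => mul_nonneg (hX i k) (hY k j)

lemma mul_entry_le_mul_entry {G X Y : Matrix n n ℝ} (hG : ∀ i j, 0 ≤ G i j)
    (hXY : ∀ i j, X i j ≤ Y i j) (i j : n) : (G * X) i j ≤ (G * Y) i j :=
  sum_le_sum fun k _ => mul_le_mul_of_nonneg_left (hXY k j) (hG i k)

variable [DecidableEq n]

lemma pow_entry_nonneg {X : Matrix n n ℝ} (hX : ∀ i j, 0 ≤ X i j) (k : ℕ) (i j : n) :
    0 ≤ (X ^ k) i j := by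
  induction k generalizing i j with
  | zero => exact one_entry_nonneg i j
  | succ k ih => rw [pow_succ]; exact mul_entry_nonneg ih hX i j

lemma pow_entry_le_pow_entry {X Y : Matrix n n ℝ} (hX : ∀ i j, 0 ≤ X i j)
    (hXY : ∀ i j, X i j ≤ Y i j) (k : ℕ) (i j : n) : (X ^ k) i j ≤ (Y ^ k) i j := by
  induction k generalizing i j with
  | zero => rfl
  | succ k ih =>
    rw [pow_succ, pow_succ]
    exact sum_le_sum fun l _ => mul_le_mul (ih i l) (hXY l j) (hX l j)
      ((pow_entry_nonneg hX k i l).trans (ih i l))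

lemma sum_pow_entry_le {Y : Matrix n n ℝ} (hY : ∀ i j, 0 ≤ Y i j) {c : ℝ} (hc : 0 ≤ c)
    (hrow : ∀ i, ∑ j, Y i j ≤ c) (k : ℕ) (i : n) : ∑ j, (Y ^ k) i j ≤ c ^ k := by
  induction k generalizing i with
  | zero => simp [one_apply]
  | succ k ih =>
    calc ∑ j, (Y ^ (k + 1)) i j = ∑ l, (Y ^ k) i l * ∑ j, Y l j := by
          simp only [pow_succ, mul_apply, mul_sum]; exact sum_comm
      _ ≤ ∑ l, (Y ^ k) i l * c :=
          sum_le_sum fun l _ => mul_le_mul_of_nonneg_left (hrow l) (pow_entry_nonneg hY k i l)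
      _ ≤ c ^ k * c := by rw [← sum_mul]; exact mul_le_mul_of_nonneg_right (ih i) hc
      _ = c ^ (k + 1) := (pow_succ c k).symm

def InverseNonneg (A : Matrix n n ℝ) : Prop :=
  ∃ G : Matrix n n ℝ, (∀ i j, 0 ≤ G i j) ∧ G * A = 1

lemma InverseNonneg.smul {A : Matrix n n ℝ} (hA : InverseNonneg A) {t : ℝ} (ht : 0 < t) :
    InverseNonneg (t • A) := by
  obtain ⟨G, hG, hGA⟩ := hA
  refine ⟨t⁻¹ • G, fun i j => mul_nonneg (inv_nonneg.mpr ht.le) (hG i j), ?_⟩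
  rw [smul_mul_smul_comm, hGA, inv_mul_cancel₀ ht.ne', one_smul]

lemma inverseNonneg_one_sub_of_summable {Y : Matrix n n ℝ} (hY : ∀ i j, 0 ≤ Y i j)
    (h : Summable fun k : ℕ => Y ^ k) : InverseNonneg (1 - Y) := by
  refine ⟨∑' k, Y ^ k, fun i j => ?_, h.tsum_pow_mul_one_sub⟩
  exact (Pi.hasSum.mp (Pi.hasSum.mp h.hasSum i) j).nonneg fun k => pow_entry_nonneg hY k i j

lemma inverseNonneg_one_sub_of_sum_le {Y : Matrix n n ℝ} (hY : ∀ i j, 0 ≤ Y i j) {c : ℝ}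
    (hc0 : 0 ≤ c) (hc1 : c < 1) (hrow : ∀ i, ∑ j, Y i j ≤ c) : InverseNonneg (1 - Y) := by
  refine inverseNonneg_one_sub_of_summable hY
    (Pi.summable.mpr fun i => Pi.summable.mpr fun j => ?_)
  refine Summable.of_nonneg_of_le (fun k => pow_entry_nonneg hY k i j) (fun k => ?_)
    (summable_geometric_of_lt_one hc0 hc1)
  exact (single_le_sum (fun l _ => pow_entry_nonneg hY k i l) (mem_univ j)).trans
    (sum_pow_entry_le hY hc0 hrow k i)

lemma sum_pow_entry_le_of_mul_one_sub_eq_one {P G : Matrix n n ℝ} (hP : ∀ i j, 0 ≤ P i j)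
    (hG : ∀ i j, 0 ≤ G i j) (h : G * (1 - P) = 1) (m : ℕ) (i j : n) :
    (∑ k ∈ range m, P ^ k) i j ≤ G i j := by
  have hdecomp : ∀ m : ℕ, G = ∑ k ∈ range m, P ^ k + G * P ^ m := by
    intro m
    induction m with
    | zero => simp
    | succ m ih =>
      have hfix : G = 1 + G * P := by
        rw [mul_sub, mul_one] at h; rw [← h]; abel
      have hstep : G * P ^ m = P ^ m + G * P ^ (m + 1) := by
        nth_rewrite 1 [hfix]
        rw [add_mul, one_mul, mul_assoc, ← pow_succ']
      rw [sum_range_succ, add_assoc, ← hstep]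
      exact ih
  calc (∑ k ∈ range m, P ^ k) i j
      ≤ (∑ k ∈ range m, P ^ k) i j + (G * P ^ m) i j :=
        le_add_of_nonneg_right (mul_entry_nonneg hG (pow_entry_nonneg hP m) i j)
    _ = G i j := by rw [← Matrix.add_apply, ← hdecomp]

lemma summable_pow_of_le {P Y G : Matrix n n ℝ} (hY : ∀ i j, 0 ≤ Y i j)
    (hYP : ∀ i j, Y i j ≤ P i j) (hG : ∀ i j, 0 ≤ G i j) (h : G * (1 - P) = 1) :
    Summable fun k : ℕ => Y ^ k := by
  have hP : ∀ i j, 0 ≤ P i j := fun i j => (hY i j).trans (hYP i j)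
  refine Pi.summable.mpr fun i => Pi.summable.mpr fun j => ?_
  refine summable_of_sum_range_le (c := G i j) (fun k => pow_entry_nonneg hY k i j) fun m => ?_
  calc ∑ k ∈ range m, (Y ^ k) i j ≤ ∑ k ∈ range m, (P ^ k) i j :=
        sum_le_sum fun k _ => pow_entry_le_pow_entry hY hYP k i j
    _ = (∑ k ∈ range m, P ^ k) i j := by simp only [Matrix.sum_apply]
    _ ≤ G i j := sum_pow_entry_le_of_mul_one_sub_eq_one hP hG h m i j

/-- With `K = A⁻¹ ≥ 0`, the matrix `(A - N)⁻¹ * A ≥ 0` bounds the Neumann series of `K * N`,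
hence that of `K * N'`. -/
lemma InverseNonneg.sub_of_le {A N N' : Matrix n n ℝ} (hA : InverseNonneg A)
    (hN' : ∀ i j, 0 ≤ N' i j) (hN'N : ∀ i j, N' i j ≤ N i j) (h : InverseNonneg (A - N)) :
    InverseNonneg (A - N') := by
  obtain ⟨K, hK, hKA⟩ := hA
  obtain ⟨L, hL, hLAN⟩ := h
  have hAK : A * K = 1 := mul_eq_one_comm.mp hKA
  have hN : ∀ i j, 0 ≤ N i j := fun i j => (hN' i j).trans (hN'N i j)
  have hLA_eq : L * A = 1 + L * N := by rw [← hLAN, mul_sub]; abel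
  have hLA : ∀ i j, 0 ≤ (L * A) i j := fun i j => by
    rw [hLA_eq, Matrix.add_apply]
    exact add_nonneg (one_entry_nonneg i j) (mul_entry_nonneg hL hN i j)
  have hLA_inv : L * A * (1 - K * N) = 1 := by
    rw [mul_sub, mul_one, mul_assoc, ← mul_assoc A, hAK, one_mul, ← mul_sub, hLAN]
  have hKN' : ∀ i j, 0 ≤ (K * N') i j := mul_entry_nonneg hK hN'
  obtain ⟨S, hS, hSinv⟩ := inverseNonneg_one_sub_of_summable hKN'
    (summable_pow_of_le hKN' (mul_entry_le_mul_entry hK hN'N) hLA hLA_inv)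
  refine ⟨S * K, mul_entry_nonneg hS hK, ?_⟩
  rw [mul_assoc, mul_sub, hKA, hSinv]

end Nonneg

lemma eventually_norm_pow_le_of_spectralRadius_lt {A : Type*} [NormedRing A]
    [NormedAlgebra ℂ A] [CompleteSpace A] {a : A} {r : ℝ}
    (h : spectralRadius ℂ a < ENNReal.ofReal r) : ∀ᶠ k in atTop, ‖a ^ k‖ ≤ r ^ k := by
  filter_upwards [(spectrum.pow_norm_pow_one_div_tendsto_nhds_spectralRadius a).eventually_lt_const
    h, eventually_ne_atTop 0] with k hk hk0
  have hr : 0 < r := ENNReal.ofReal_pos.mp (zero_le.trans_lt h)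
  have hlt : ‖a ^ k‖ ^ (1 / k : ℝ) < r := (ENNReal.ofReal_lt_ofReal_iff hr).mp hk
  calc ‖a ^ k‖ = (‖a ^ k‖ ^ (1 / k : ℝ)) ^ k := by
        rw [one_div, Real.rpow_inv_natCast_pow (norm_nonneg _) hk0]
    _ ≤ r ^ k := pow_le_pow_left₀ (by positivity) hlt.le k

section SpectralRadius

variable {n : Type*} [Fintype n] [DecidableEq n]

lemma specRad_set_eq (X : Matrix n n ℝ) :
    {x : ℝ | ∃ μ : ℂ, μ ∈ spectrum ℂ (X.map (algebraMap ℝ ℂ)) ∧ x = ‖μ‖} =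
      norm '' spectrum ℂ (X.map (algebraMap ℝ ℂ)) := by
  ext x; simp [eq_comm]

lemma specRad_nonneg (X : Matrix n n ℝ) : 0 ≤ specRad X :=
  Real.sSup_nonneg fun _ ⟨μ, _, hx⟩ => hx ▸ norm_nonneg μ

lemma norm_le_specRad {X : Matrix n n ℝ} {μ : ℂ}
    (hμ : μ ∈ spectrum ℂ (X.map (algebraMap ℝ ℂ))) : ‖μ‖ ≤ specRad X := by
  rw [specRad, specRad_set_eq]
  exact le_csSup ((finite_spectrum _).image _).bddAbove ⟨μ, hμ, rfl⟩

lemma specRad_lt_of_forall_norm_lt {X : Matrix n n ℝ} {s : ℝ} (hs : 0 < s)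
    (h : ∀ μ ∈ spectrum ℂ (X.map (algebraMap ℝ ℂ)), ‖μ‖ < s) : specRad X < s := by
  rw [specRad, specRad_set_eq]
  rcases (spectrum ℂ (X.map (algebraMap ℝ ℂ))).eq_empty_or_nonempty with he | hne
  · rwa [he, Set.image_empty, Real.sSup_empty]
  · exact (((finite_spectrum _).image _).csSup_lt_iff (hne.image _)).mpr
      (Set.forall_mem_image.mpr h)

lemma spectralRadius_map_le_specRad (X : Matrix n n ℝ) :
    spectralRadius ℂ (X.map (algebraMap ℝ ℂ)) ≤ ENNReal.ofReal (specRad X) :=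
  iSup₂_le fun _ hμ => by
    rw [← enorm_eq_nnnorm, ← ofReal_norm]; exact ENNReal.ofReal_le_ofReal (norm_le_specRad hμ)

end SpectralRadius

section LinftyOpNorm

attribute [local instance] Matrix.linftyOpSeminormedAddCommGroup Matrix.linftyOpNormedRing
  Matrix.linftyOpNormedAlgebra

lemma norm_entry_le_linfty_opNorm {m n α : Type*} [Fintype m] [Fintype n] [SeminormedAddCommGroup α]
    (B : Matrix m n α) (i : m) (j : n) : ‖B i j‖ ≤ ‖B‖ := by
  have : ‖B i j‖₊ ≤ ‖B‖₊ := by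
    rw [linfty_opNNNorm_def]
    exact (single_le_sum (f := fun j => ‖B i j‖₊) (fun _ _ => zero_le) (mem_univ j)).trans
      (le_sup (f := fun i => ∑ j, ‖B i j‖₊) (mem_univ i))
  exact_mod_cast this

/-- Gelfand's formula for the complexification bounds `‖X ^ k‖` by `r ^ k` for any
`specRad X < r < s`. -/
lemma summable_pow_inv_smul_of_specRad_lt {n : Type*} [Fintype n] [DecidableEq n]
    {X : Matrix n n ℝ} {s : ℝ} (h : specRad X < s) :
    Summable fun k : ℕ => (s⁻¹ • X) ^ k := by
  have hs : 0 < s := (specRad_nonneg X).trans_lt h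
  obtain ⟨r, hXr, hrs⟩ := exists_between h
  have hr : 0 < r := (specRad_nonneg X).trans_lt hXr
  have hpow := eventually_norm_pow_le_of_spectralRadius_lt
    ((spectralRadius_map_le_specRad X).trans_lt ((ENNReal.ofReal_lt_ofReal_iff hr).mpr hXr))
  refine Pi.summable.mpr fun i => Pi.summable.mpr fun j => ?_
  refine Summable.of_norm_bounded_eventually (summable_geometric_of_lt_one
    (div_nonneg hr.le hs.le) ((div_lt_one hs).mpr hrs)) ?_
  rw [Nat.cofinite_eq_atTop]
  filter_upwards [hpow] with k hk
  calc ‖((s⁻¹ • X) ^ k) i j‖ = s⁻¹ ^ k * ‖(X.map (algebraMap ℝ ℂ) ^ k) i j‖ := by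
        rw [← Matrix.map_pow]; simp [smul_pow, abs_of_pos hs]
    _ ≤ s⁻¹ ^ k * r ^ k :=
        mul_le_mul_of_nonneg_left ((norm_entry_le_linfty_opNorm _ i j).trans hk) (by positivity)
    _ = (r / s) ^ k := by rw [← mul_pow, inv_mul_eq_div]

end LinftyOpNorm

section SpectralRadius

variable {n : Type*} [Fintype n] [DecidableEq n]

lemma exists_mulVec_eq_smul_of_mem_spectrum {K : Type*} [Field K] {B : Matrix n n K} {μ : K}
    (hμ : μ ∈ spectrum K B) : ∃ v ≠ 0, B *ᵥ v = μ • v := by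
  rw [← spectrum_toLin', ← Module.End.hasEigenvalue_iff_mem_spectrum] at hμ
  obtain ⟨v, hv⟩ := hμ.exists_hasEigenvector
  exact ⟨v, hv.2, by simpa using hv.apply_eq_smul⟩

lemma exists_nonneg_le_mulVec_of_mem_spectrum {X : Matrix n n ℝ} (hX : ∀ i j, 0 ≤ X i j)
    {μ : ℂ} (hμ : μ ∈ spectrum ℂ (X.map (algebraMap ℝ ℂ))) :
    ∃ u : n → ℝ, (∀ i, 0 ≤ u i) ∧ u ≠ 0 ∧ ∀ i, ‖μ‖ * u i ≤ (X *ᵥ u) i := by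
  obtain ⟨v, hv0, hv⟩ := exists_mulVec_eq_smul_of_mem_spectrum hμ
  refine ⟨fun i => ‖v i‖, fun i => norm_nonneg _, fun hu => hv0 (funext fun i => ?_), fun i => ?_⟩
  · exact norm_eq_zero.mp (congrFun hu i)
  · calc ‖μ‖ * ‖v i‖ = ‖∑ j, (X i j : ℂ) * v j‖ := by
          rw [← norm_mul, ← smul_eq_mul, ← Pi.smul_apply, ← hv]; rfl
      _ ≤ ∑ j, X i j * ‖v j‖ := (norm_sum_le _ _).trans_eq <| sum_congr rfl fun j _ => by
          rw [norm_mul, Complex.norm_real, Real.norm_of_nonneg (hX i j)]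

lemma lt_of_le_mulVec_of_inverseNonneg {X : Matrix n n ℝ} {s c : ℝ}
    (h : InverseNonneg (s • 1 - X)) {u : n → ℝ} (hu0 : ∀ i, 0 ≤ u i) (hu : u ≠ 0)
    (hc : ∀ i, c * u i ≤ (X *ᵥ u) i) : c < s := by
  obtain ⟨G, hG, hGX⟩ := h
  by_contra! hsc
  refine hu (funext fun i => le_antisymm ?_ (hu0 i))
  calc u i = (G *ᵥ ((s • 1 - X) *ᵥ u)) i := by rw [mulVec_mulVec, hGX, one_mulVec]
    _ = ∑ j, G i j * (s * u j - (X *ᵥ u) j) := by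
        simp [mulVec, dotProduct, sub_mul, sum_sub_distrib, one_apply]
    _ ≤ ∑ j, G i j * 0 := sum_le_sum fun j _ =>
        mul_le_mul_of_nonneg_left (by nlinarith [hc j, hu0 j]) (hG i j)
    _ = 0 := by simp

theorem specRad_lt_iff_inverseNonneg {X : Matrix n n ℝ} (hX : ∀ i j, 0 ≤ X i j) {s : ℝ}
    (hs : 0 < s) : specRad X < s ↔ InverseNonneg (s • 1 - X) := by
  constructor
  · intro h
    obtain ⟨G, hG, hGinv⟩ := inverseNonneg_one_sub_of_summable (Y := s⁻¹ • X)
      (fun i j => mul_nonneg (inv_nonneg.mpr hs.le) (hX i j))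
      (summable_pow_inv_smul_of_specRad_lt h)
    refine ⟨s⁻¹ • G, fun i j => mul_nonneg (inv_nonneg.mpr hs.le) (hG i j), ?_⟩
    rw [smul_mul_assoc, ← mul_smul_comm, smul_sub, smul_smul, inv_mul_cancel₀ hs.ne', one_smul,
      hGinv]
  · intro h
    refine specRad_lt_of_forall_norm_lt hs fun μ hμ => ?_
    obtain ⟨u, hu0, hu, hXu⟩ := exists_nonneg_le_mulVec_of_mem_spectrum hX hμ
    exact lt_of_le_mulVec_of_inverseNonneg h hu0 hu hXu

end SpectralRadius

section RegularSplitting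

variable {n : Type*} [Fintype n] [DecidableEq n]

theorem specRad_inv_mul_lt_iff {M N : Matrix n n ℝ} (hM : InverseNonneg M)
    (hN : ∀ i j, 0 ≤ N i j) {t : ℝ} (ht : 0 < t) :
    specRad (M⁻¹ * N) < t ↔ InverseNonneg (t • M - N) := by
  obtain ⟨G, hG, hGM⟩ := hM
  have hMG : M * G = 1 := mul_eq_one_comm.mp hGM
  rw [inv_eq_left_inv hGM, specRad_lt_iff_inverseNonneg (mul_entry_nonneg hG hN) ht]
  constructor
  · rintro ⟨H, hH, hHC⟩
    refine ⟨H * G, mul_entry_nonneg hH hG, ?_⟩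
    rw [mul_assoc, mul_sub, mul_smul_comm, hGM, hHC]
  · rintro ⟨L, hL, hLW⟩
    have hLM : t • (L * M) = 1 + L * N := by
      rw [← hLW, mul_sub, mul_smul_comm]; abel
    refine ⟨L * M, fun i j => ?_, ?_⟩
    · have hij := congrFun (congrFun hLM i) j
      rw [Matrix.smul_apply, Matrix.add_apply, smul_eq_mul] at hij
      exact nonneg_of_mul_nonneg_right
        (hij ▸ add_nonneg (one_entry_nonneg i j) (mul_entry_nonneg hL hN i j)) ht
    · rw [mul_assoc, mul_sub, mul_smul_comm, mul_one, ← mul_assoc M, hMG, one_mul, hLW]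

theorem specRad_inv_mul_lt_one {M N : Matrix n n ℝ} (hM : InverseNonneg M)
    (hN : ∀ i j, 0 ≤ N i j) (hA : InverseNonneg (M - N)) : specRad (M⁻¹ * N) < 1 :=
  (specRad_inv_mul_lt_iff hM hN one_pos).mpr (by rwa [one_smul])

theorem specRad_inv_mul_le_of_le {M₁ N₁ M₂ N₂ : Matrix n n ℝ} (hM₁ : InverseNonneg M₁)
    (hN₁ : ∀ i j, 0 ≤ N₁ i j) (hM₂ : InverseNonneg M₂) (hN₂ : ∀ i j, 0 ≤ N₂ i j)
    (hA : InverseNonneg (M₁ - N₁)) (hsplit : M₂ - N₂ = M₁ - N₁) (hN : ∀ i j, N₂ i j ≤ N₁ i j) :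
    specRad (M₂⁻¹ * N₂) ≤ specRad (M₁⁻¹ * N₁) := by
  have hlt_of_lt : ∀ t, specRad (M₁⁻¹ * N₁) < t → t ≤ 1 → specRad (M₂⁻¹ * N₂) < t := by
    intro t ht ht1
    have ht0 : 0 < t := (specRad_nonneg _).trans_lt ht
    have hW : ∀ M N : Matrix n n ℝ, M - N = M₁ - N₁ → t • M - N = t • (M₁ - N₁) - (1 - t) • N :=
      fun M N h => by rw [← h]; module
    rw [specRad_inv_mul_lt_iff hM₁ hN₁ ht0, hW M₁ N₁ rfl] at ht
    rw [specRad_inv_mul_lt_iff hM₂ hN₂ ht0, hW M₂ N₂ hsplit]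
    exact (hA.smul ht0).sub_of_le (fun i j => mul_nonneg (sub_nonneg.mpr ht1) (hN₂ i j))
      (fun i j => mul_le_mul_of_nonneg_left (hN i j) (sub_nonneg.mpr ht1)) ht
  refine le_of_forall_gt fun t ht => ?_
  have hlt1 := specRad_inv_mul_lt_one hM₁ hN₁ hA
  exact (hlt_of_lt (min t 1) (lt_min ht hlt1) (min_le_right t 1)).trans_le (min_le_left t 1)

end RegularSplitting

section Options

variable {S A W : Type*} [Fintype A] [Fintype W]

/-- With `g = β`, `g = 1 - β` and `g = 1` this is `N / γ`, `P_♯ / γ` and `P_σ`. -/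
def optionKernel (μ : S → W → ℝ) (π : W → S → A → ℝ) (P : S → A → S → ℝ) (g : W → S → ℝ) :
    Matrix S S ℝ :=
  of fun s s' => ∑ w, μ s w * ∑ a, π w s a * P s a s' * g w s'

variable {μ : S → W → ℝ} {π : W → S → A → ℝ} {P : S → A → S → ℝ}

lemma optionKernel_nonneg (hμ : ∀ s w, 0 ≤ μ s w) (hπ : ∀ w s a, 0 ≤ π w s a)
    (hP : ∀ s a s', 0 ≤ P s a s') {g : W → S → ℝ} (hg : 0 ≤ g) (s s' : S) :
    0 ≤ optionKernel μ π P g s s' :=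
  sum_nonneg fun w _ => mul_nonneg (hμ s w) <| sum_nonneg fun a _ =>
    mul_nonneg (mul_nonneg (hπ w s a) (hP s a s')) (hg w s')

lemma optionKernel_mono (hμ : ∀ s w, 0 ≤ μ s w) (hπ : ∀ w s a, 0 ≤ π w s a)
    (hP : ∀ s a s', 0 ≤ P s a s') {g g' : W → S → ℝ} (hgg' : g ≤ g') (s s' : S) :
    optionKernel μ π P g s s' ≤ optionKernel μ π P g' s s' :=
  sum_le_sum fun w _ => mul_le_mul_of_nonneg_left (sum_le_sum fun a _ =>
    mul_le_mul_of_nonneg_left (hgg' w s') (mul_nonneg (hπ w s a) (hP s a s'))) (hμ s w)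

lemma optionKernel_add (g g' : W → S → ℝ) :
    optionKernel μ π P g + optionKernel μ π P g' = optionKernel μ π P (g + g') := by
  ext s s'
  simp only [optionKernel, Matrix.add_apply, of_apply, Pi.add_apply, ← sum_add_distrib, ← mul_add]

variable [Fintype S]

lemma sum_optionKernel_one (hμ : ∀ s, ∑ w, μ s w = 1) (hπ : ∀ w s, ∑ a, π w s a = 1)
    (hP : ∀ s a, ∑ s', P s a s' = 1) (s : S) : ∑ s', optionKernel μ π P 1 s s' = 1 := by
  calc ∑ s', optionKernel μ π P 1 s s' = ∑ w, μ s w * ∑ a, π w s a * ∑ s', P s a s' := by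
        simp only [optionKernel, of_apply, Pi.one_apply, mul_one, mul_sum]
        rw [sum_comm]
        exact sum_congr rfl fun w _ => sum_comm
    _ = 1 := by simp only [hP, mul_one, hπ, hμ]

lemma inverseNonneg_one_sub_smul_optionKernel [DecidableEq S] (hμ : ∀ s w, 0 ≤ μ s w)
    (hμsum : ∀ s, ∑ w, μ s w = 1) (hπ : ∀ w s a, 0 ≤ π w s a) (hπsum : ∀ w s, ∑ a, π w s a = 1)
    (hP : ∀ s a s', 0 ≤ P s a s') (hPsum : ∀ s a, ∑ s', P s a s' = 1) {γ : ℝ} (hγ0 : 0 ≤ γ)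
    (hγ1 : γ < 1) {g : W → S → ℝ} (hg0 : 0 ≤ g) (hg1 : g ≤ 1) :
    InverseNonneg (1 - γ • optionKernel μ π P g) := by
  refine inverseNonneg_one_sub_of_sum_le
    (fun s s' => mul_nonneg hγ0 (optionKernel_nonneg hμ hπ hP hg0 s s')) hγ0 hγ1 fun s => ?_
  calc ∑ s', (γ • optionKernel μ π P g) s s' = γ * ∑ s', optionKernel μ π P g s s' := by
        simp only [Matrix.smul_apply, smul_eq_mul, mul_sum]
    _ ≤ γ * ∑ s', optionKernel μ π P 1 s s' :=
        mul_le_mul_of_nonneg_left (sum_le_sum fun s' _ => optionKernel_mono hμ hπ hP hg1 s s') hγ0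
    _ = γ := by rw [sum_optionKernel_one hμsum hπsum hPsum, mul_one]

end Options

theorem stmt8
    {S A W : Type*} [Fintype S] [DecidableEq S] [Fintype A] [Fintype W]
    (μ : S → W → ℝ) (π : W → S → A → ℝ) (P : S → A → S → ℝ)
    (β βt : W → S → ℝ)
    (hμpos : ∀ s w, 0 ≤ μ s w) (hμsum : ∀ s, ∑ w, μ s w = 1)
    (hπpos : ∀ w s a, 0 ≤ π w s a) (hπsum : ∀ w s, ∑ a, π w s a = 1)
    (hPpos : ∀ s a s', 0 ≤ P s a s') (hPsum : ∀ s a, ∑ s', P s a s' = 1)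
    (hβ0 : ∀ w s, 0 ≤ β w s) (hβ1 : ∀ w s, β w s ≤ 1)
    (hβt0 : ∀ w s, 0 ≤ βt w s) (hβt1 : ∀ w s, βt w s ≤ 1)
    (hβle : ∀ w s, βt w s ≤ β w s)
    (γ : ℝ) (hγ0 : 0 ≤ γ) (hγ1 : γ < 1)
    -- termination matrices N, Ñ and preconditioners M, M̃ induced by the two
    -- option sets (same policies, different termination functions)
    (N Nt M Mt : Matrix S S ℝ)
    (hN : ∀ s s', N s s' =
      γ * ∑ w, μ s w * ∑ a, π w s a * P s a s' * β w s')
    (hNt : ∀ s s', Nt s s' =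
      γ * ∑ w, μ s w * ∑ a, π w s a * P s a s' * βt w s')
    (hM : ∀ s s', M s s' = (1 : Matrix S S ℝ) s s' -
      γ * ∑ w, μ s w * ∑ a, π w s a * P s a s' * (1 - β w s'))
    (hMt : ∀ s s', Mt s s' = (1 : Matrix S S ℝ) s s' -
      γ * ∑ w, μ s w * ∑ a, π w s a * P s a s' * (1 - βt w s')) :
    (∀ s s', Nt s s' ≤ N s s') ∧
    specRad (Mt⁻¹ * Nt) ≤ specRad (M⁻¹ * N) ∧ specRad (M⁻¹ * N) < 1 := by
  set K := optionKernel μ π P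
  obtain rfl : N = γ • K β := ext hN
  obtain rfl : Nt = γ • K βt := ext hNt
  obtain rfl : M = 1 - γ • K (1 - β) := ext hM
  obtain rfl : Mt = 1 - γ • K (1 - βt) := ext hMt
  have hinv_nonneg : ∀ g, 0 ≤ g → g ≤ 1 → InverseNonneg (1 - γ • K g) := fun _ =>
    inverseNonneg_one_sub_smul_optionKernel hμpos hμsum hπpos hπsum hPpos hPsum hγ0 hγ1
  have hγK_nonneg : ∀ g, 0 ≤ g → ∀ s s', 0 ≤ (γ • K g) s s' := fun _ hg s s' =>
    mul_nonneg hγ0 (optionKernel_nonneg hμpos hπpos hPpos hg s s')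
  have hsplit : ∀ g, 1 - γ • K (1 - g) - γ • K g = 1 - γ • K 1 := fun g => by
    rw [sub_sub, ← smul_add, optionKernel_add, sub_add_cancel]
  have hA : InverseNonneg (1 - γ • K (1 - β) - γ • K β) := by
    rw [hsplit]; exact hinv_nonneg 1 zero_le_one le_rfl
  have hNtN : ∀ s s', (γ • K βt) s s' ≤ (γ • K β) s s' := fun s s' =>
    mul_le_mul_of_nonneg_left (optionKernel_mono hμpos hπpos hPpos hβle s s') hγ0
  have hM := hinv_nonneg (1 - β) (sub_nonneg.mpr hβ1) (sub_le_self 1 hβ0)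
  have hMt := hinv_nonneg (1 - βt) (sub_nonneg.mpr hβt1) (sub_le_self 1 hβt0)
  exact ⟨hNtN, specRad_inv_mul_le_of_le hM (hγK_nonneg β hβ0) hMt (hγK_nonneg βt hβt0) hA
    (by rw [hsplit, hsplit]) hNtN, specRad_inv_mul_lt_one hM (hγK_nonneg β hβ0) hA⟩
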